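/- Let s, p be quaternions with p ∉ [s] and |p| < |s|. Then the P₂-kernel admits the series expansion P₂^L(s,p) = 2 ∑_{n=1}^{∞} ( n p^{n-1} + ∑_{j=1}^{n} p^{n-j} p̄^{j-1} ) s^{-1-n}, and the series converges absolutely. -/

import Mathlib

/-!
The Cauchy kernel series `K(x) = ∑ xⁿ s⁻ⁿ⁻¹` satisfies the Sylvester equation `K s - x K = 1`, and,
by the recurrence `c_{m+1} = p c_m + p^{m+1} + p̄^{m+1}` of the coefficients, the series `T` of the
theorem satisfies `T s - p T = 2 (K(p) + K(p̄))`. Since `x² - 2 Re(x) x + |x|² = 0` and `Q_{c,s}(x)`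
is a real polynomial in `s`, every solution of `X s - x X = C` satisfies `X Q_{c,s}(x) = C s - x̄ C`.
Writing `Q_{c,s}(p) = (s - p₀)² + |Im p|²` shows that it vanishes only for `p ∈ [s]`, so the
Sylvester equations determine `K(x) = (s - x̄) Q_{c,s}(x)⁻¹` and then
`T = 4 (s - p̄) (s - p₀) Q_{c,s}(p)⁻² = P₂^L(s,p)`. Absolute convergence is comparison with
`∑ (n + 1) (|p| / |s|)ⁿ`.
-/

open scoped Quaternion

/-- The 2-sphere `[s]` of a quaternion `s`. -/
def qSphere (s : ℍ[ℝ]) : Set ℍ[ℝ] := {x | x.re = s.re ∧ ‖x.im‖ = ‖s.im‖}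

/-- `Q_{c,s}(p) = s² - 2 Re(p) s + |p|²`. -/
noncomputable def Qc (s p : ℍ[ℝ]) : ℍ[ℝ] :=
  s ^ 2 - 2 * ((p.re : ℝ) : ℍ[ℝ]) * s + ((Quaternion.normSq p : ℝ) : ℍ[ℝ])

/-- `F_L(s,p) = -4 (s - p̄) Q_{c,s}(p)^{-2}`. -/
noncomputable def FL (s p : ℍ[ℝ]) : ℍ[ℝ] := -4 * (s - star p) * ((Qc s p)⁻¹) ^ 2

/-- `P₂^L(s,p) = -F_L(s,p)·s + p₀·F_L(s,p)`, `p₀ = Re p`. -/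
noncomputable def P2L (s p : ℍ[ℝ]) : ℍ[ℝ] :=
  -(FL s p * s) + ((p.re : ℝ) : ℍ[ℝ]) * FL s p

open Finset

namespace Quaternion

theorem sq_sub_two_re_mul_add_normSq {R : Type*} [CommRing R] (p : ℍ[R]) :
    p ^ 2 - 2 * (p.re : ℍ[R]) * p + ((normSq p : R) : ℍ[R]) = 0 := by
  rw [← self_add_star, ← self_mul_star]
  linear_combination (norm := noncomm_ring) -(star_comm_self (x := p)).eq

theorem normSq_eq_re_sq_add_normSq_im {R : Type*} [CommRing R] (p : ℍ[R]) :
    normSq p = p.re ^ 2 + normSq p.im := by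
  simp only [normSq_def', re_im, imI_im, imJ_im, imK_im]; ring

theorem re_eq_zero_of_sq_eq_neg_coe {R : Type*} [Field R] [LinearOrder R] [IsStrictOrderedRing R]
    {u : ℍ[R]} {r : R} (hr : 0 ≤ r) (h : u ^ 2 = -(r : ℍ[R])) :
    u.re = 0 := by
  have hcomp := QuaternionAlgebra.ext_iff.mp h
  simp only [sq, re_mul, imI_mul, imJ_mul, imK_mul, re_neg, imI_neg, imJ_neg, imK_neg, re_coe,
    imI_coe, imJ_coe, imK_coe, neg_zero] at hcomp
  obtain ⟨h0, h1, h2, h3⟩ := hcomp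
  by_contra hre
  have hI : u.imI = 0 := by
    apply (mul_eq_zero.mp _).resolve_left hre; linear_combination h1 / 2
  have hJ : u.imJ = 0 := by
    apply (mul_eq_zero.mp _).resolve_left hre; linear_combination h2 / 2
  have hK : u.imK = 0 := by
    apply (mul_eq_zero.mp _).resolve_left hre; linear_combination h3 / 2
  rw [hI, hJ, hK] at h0
  exact hre (pow_eq_zero_iff two_ne_zero |>.mp (by nlinarith))

end Quaternion

open Quaternion

theorem Qc_eq_sq_add (s p : ℍ[ℝ]) :
    Qc s p = (s - p.re) ^ 2 + ((normSq p.im : ℝ) : ℍ[ℝ]) := by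
  rw [Qc, normSq_eq_re_sq_add_normSq_im]
  push_cast
  linear_combination (norm := noncomm_ring) -(coe_commutes p.re s)

theorem Qc_star (s p : ℍ[ℝ]) : Qc s (star p) = Qc s p := by
  rw [Qc, Qc, re_star, normSq_star]

theorem commute_Qc (s p : ℍ[ℝ]) : Commute s (Qc s p) :=
  ((Commute.self_pow s 2).sub_right (((coe_commute _ s).symm.mul_right
    (coe_commute _ s).symm).mul_right (Commute.refl s))).add_right (coe_commute _ s).symm

theorem Qc_ne_zero {s p : ℍ[ℝ]} (h : p ∉ qSphere s) : Qc s p ≠ 0 := by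
  intro hQ
  have hsq : (s - p.re) ^ 2 = -((normSq p.im : ℝ) : ℍ[ℝ]) := by
    rw [Qc_eq_sq_add] at hQ; exact eq_neg_of_add_eq_zero_left hQ
  have hre : s.re = p.re := by
    simpa [sub_eq_zero] using re_eq_zero_of_sq_eq_neg_coe normSq_nonneg hsq
  have hs_im : s - p.re = s.im := by rw [← hre, sub_re_self]
  rw [hs_im, sq_eq_neg_normSq.mpr (re_im s), neg_inj] at hsq
  refine h ⟨hre.symm, (mul_self_inj (norm_nonneg _) (norm_nonneg _)).mp ?_⟩
  rw [← normSq_eq_norm_mul_self, ← normSq_eq_norm_mul_self]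
  exact coe_injective hsq.symm

noncomputable def sylvesterSolution (s p C : ℍ[ℝ]) : ℍ[ℝ] := (C * s - star p * C) * (Qc s p)⁻¹

theorem eq_sylvesterSolution_of_mul_sub_mul_eq {s p X C : ℍ[ℝ]} (hQ : Qc s p ≠ 0)
    (h : X * s - p * X = C) : X = sylvesterSolution s p C := by
  rw [sylvesterSolution, eq_mul_inv_iff_mul_eq₀ hQ, Qc]
  linear_combination (norm := noncomm_ring) h * s + p * h - 2 * (p.re : ℍ[ℝ]) * h
    + sq_sub_two_re_mul_add_normSq p * X + self_add_star p * C
    + 2 * coe_commutes p.re X * s - coe_commutes (normSq p) X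

theorem mul_eq_mul_add_of_hasSum_of_succ {R : Type*} [Ring R] [TopologicalSpace R]
    [IsTopologicalRing R] [T2Space R] {a b w : ℕ → R} {p s X Y : R}
    (hX : HasSum (fun n => a n * w n) X) (hY : HasSum (fun n => b n * w n) Y)
    (hw : ∀ n, w (n + 1) * s = w n) (h0 : a 0 = b 0)
    (hrec : ∀ n, a (n + 1) = p * a n + b (n + 1)) :
    X * s = p * X + Y * s := by
  have hdiff : HasSum (fun n => (a n - b n) * w n * s) ((X - Y) * s) := by
    simpa only [sub_mul] using (hX.sub hY).mul_right s
  have hshift : HasSum (fun n => p * (a n * w n)) ((X - Y) * s) := by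
    have hsucc := (hasSum_nat_add_iff' 1).mpr hdiff
    simp only [range_one, sum_singleton, h0, sub_self, zero_mul, sub_zero] at hsucc
    have hterm : (fun n => (a (n + 1) - b (n + 1)) * w (n + 1) * s) = fun n => p * (a n * w n) :=
      funext fun n => by rw [hrec, add_sub_cancel_right, mul_assoc, hw, mul_assoc]
    rwa [hterm] at hsucc
  have := hshift.unique (hX.mul_left p)
  linear_combination (norm := noncomm_ring) this

theorem summable_norm_mul_inv_pow {𝕜 : Type*} [NormedDivisionRing 𝕜] {s p : 𝕜} (h : ‖p‖ < ‖s‖)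
    {a : ℕ → 𝕜} {C : ℝ}
    (ha : ∀ n, ‖a n‖ ≤ C * (n + 1) * ‖p‖ ^ n) (k : ℕ) :
    Summable (fun n => ‖a n * s⁻¹ ^ (n + k)‖) := by
  have hr : ‖‖p‖ * ‖s⁻¹‖‖ < 1 := by
    rw [norm_inv, Real.norm_of_nonneg (by positivity), ← div_eq_mul_inv,
      div_lt_one ((norm_nonneg p).trans_lt h)]
    exact h
  have hmajor : Summable (fun n : ℕ => C * ‖s⁻¹‖ ^ k * ((n + 1) * (‖p‖ * ‖s⁻¹‖) ^ n)) := by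
    refine Summable.mul_left _ ?_
    simpa [add_mul] using
      (summable_pow_mul_geometric_of_norm_lt_one 1 hr).add (summable_geometric_of_norm_lt_one hr)
  refine hmajor.of_nonneg_of_le (fun n => norm_nonneg _) fun n => ?_
  calc ‖a n * s⁻¹ ^ (n + k)‖ = ‖a n‖ * ‖s⁻¹‖ ^ n * ‖s⁻¹‖ ^ k := by
        rw [norm_mul, norm_pow, pow_add, mul_assoc]
    _ ≤ C * (n + 1) * ‖p‖ ^ n * ‖s⁻¹‖ ^ n * ‖s⁻¹‖ ^ k := by gcongr; exact ha n
    _ = _ := by ring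

-- The left slice Cauchy kernel `S⁻¹_L(s,x)`.
noncomputable def cauchyKernelL (s x : ℍ[ℝ]) : ℍ[ℝ] := (s - star x) * (Qc s x)⁻¹

theorem hasSum_cauchyKernelL {s x : ℍ[ℝ]} (h : ‖x‖ < ‖s‖) (hQ : Qc s x ≠ 0) :
    HasSum (fun n => x ^ n * s⁻¹ ^ (n + 1)) (cauchyKernelL s x) := by
  have hs : s ≠ 0 := norm_pos_iff.mp ((norm_nonneg x).trans_lt h)
  have hbound (n : ℕ) : ‖x ^ n‖ ≤ 1 * (n + 1) * ‖x‖ ^ n := by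
    rw [norm_pow, one_mul]
    exact le_mul_of_one_le_left (by positivity) (by linarith [n.cast_nonneg (α := ℝ)])
  obtain ⟨K, hK⟩ := (summable_norm_mul_inv_pow h hbound 1).of_norm
  have hone : HasSum (fun n => (Pi.single 0 1 : ℕ → ℍ[ℝ]) n * s⁻¹ ^ (n + 1)) s⁻¹ := by
    simpa using hasSum_single (f := fun n => (Pi.single 0 1 : ℕ → ℍ[ℝ]) n * s⁻¹ ^ (n + 1)) 0
      fun n hn => by rw [Pi.single_eq_of_ne hn, zero_mul]
  have hKs := mul_eq_mul_add_of_hasSum_of_succ hK hone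
    (fun n => by rw [pow_succ _ (n + 1), mul_assoc, inv_mul_cancel₀ hs, mul_one]) (by simp)
    (fun n => by rw [Pi.single_eq_of_ne n.succ_ne_zero, add_zero, pow_succ'])
  rw [inv_mul_cancel₀ hs] at hKs
  rwa [eq_sylvesterSolution_of_mul_sub_mul_eq hQ (sub_eq_of_eq_add' hKs), sylvesterSolution,
    one_mul, mul_one] at hK

theorem cauchyKernelL_add_star (s p : ℍ[ℝ]) :
    cauchyKernelL s p + cauchyKernelL s (star p) = 2 * (s - p.re) * (Qc s p)⁻¹ := by
  rw [cauchyKernelL, cauchyKernelL, Qc_star, star_star]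
  linear_combination (norm := noncomm_ring) -(self_add_star p) * (Qc s p)⁻¹

theorem P2L_eq_sylvesterSolution (s p : ℍ[ℝ]) :
    P2L s p = sylvesterSolution s p (2 * (cauchyKernelL s p + cauchyKernelL s (star p))) := by
  have hq : Commute s (Qc s p)⁻¹ := (commute_Qc s p).inv_right₀
  rw [sylvesterSolution, cauchyKernelL_add_star, P2L, FL]
  set q := (Qc s p)⁻¹
  linear_combination (norm := noncomm_ring) -4 * (s - star p) * (q * hq.eq + hq.eq * q)
    + 4 * (s - p.re) * hq.eq * q + 4 * coe_commutes p.re (star p) * q * q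

def p2Coeff {R : Type*} [Ring R] (p q : R) (m : ℕ) : R :=
  ((m + 1 : ℕ) : R) * p ^ m + ∑ j ∈ range (m + 1), p ^ (m - j) * q ^ j

section p2Coeff

variable {R : Type*} [Ring R] (p q : R)

theorem p2Coeff_zero : p2Coeff p q 0 = 2 := by
  norm_num [p2Coeff, one_add_one_eq_two]

theorem p2Coeff_succ (m : ℕ) :
    p2Coeff p q (m + 1) = p * p2Coeff p q m + p ^ (m + 1) + q ^ (m + 1) := by
  have hsum : p * ∑ j ∈ range (m + 1), p ^ (m - j) * q ^ j
      = ∑ j ∈ range (m + 1), p ^ (m + 1 - j) * q ^ j := by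
    rw [mul_sum]
    refine sum_congr rfl fun j hj => ?_
    rw [← mul_assoc, ← pow_succ', Nat.sub_add_comm (Nat.le_of_lt_succ (mem_range.mp hj))]
  have hcoe : p * ((m + 1 : ℕ) : R) * p ^ m = ((m + 1 : ℕ) : R) * p ^ (m + 1) := by
    rw [← (Nat.cast_commute _ p).eq, mul_assoc, ← pow_succ']
  rw [p2Coeff, p2Coeff, sum_range_succ, Nat.sub_self, pow_zero, one_mul, mul_add, hsum,
    ← mul_assoc, hcoe, Nat.cast_succ (m + 1)]
  noncomm_ring

end p2Coeff

theorem norm_p2Coeff_le {p q : ℍ[ℝ]} (hq : ‖q‖ ≤ ‖p‖) (m : ℕ) :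
    ‖p2Coeff p q m‖ ≤ 2 * (m + 1) * ‖p‖ ^ m := by
  have hterm (j : ℕ) (hj : j ∈ range (m + 1)) : ‖p ^ (m - j) * q ^ j‖ ≤ ‖p‖ ^ m := by
    rw [norm_mul, norm_pow, norm_pow,
      ← pow_sub_mul_pow ‖p‖ (Nat.le_of_lt_succ (mem_range.mp hj))]
    gcongr
  calc ‖p2Coeff p q m‖
      ≤ ‖((m + 1 : ℕ) : ℍ[ℝ]) * p ^ m‖ + ∑ j ∈ range (m + 1), ‖p ^ (m - j) * q ^ j‖ :=
        (norm_add_le _ _).trans (by gcongr; exact norm_sum_le _ _)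
    _ ≤ (m + 1) * ‖p‖ ^ m + ∑ j ∈ range (m + 1), ‖p‖ ^ m := by
        gcongr with j hj
        · rw [norm_mul, norm_pow, ← coe_natCast, norm_coe, Real.norm_natCast]; push_cast; rfl
        · exact hterm j hj
    _ = 2 * (m + 1) * ‖p‖ ^ m := by
        rw [sum_const, card_range, nsmul_eq_mul]; push_cast; ring

theorem mul_sub_mul_eq_of_hasSum_p2Coeff {s p T : ℍ[ℝ]} (h : ‖p‖ < ‖s‖) (hQ : Qc s p ≠ 0)
    (hT : HasSum (fun m => 2 * p2Coeff p (star p) m * s⁻¹ ^ (m + 2)) T) :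
    T * s - p * T = 2 * (cauchyKernelL s p + cauchyKernelL s (star p)) := by
  have hs : s ≠ 0 := norm_pos_iff.mp ((norm_nonneg p).trans_lt h)
  have hK := (hasSum_cauchyKernelL h hQ).add
    (hasSum_cauchyKernelL (s := s) (x := star p) (by rwa [Quaternion.norm_star]) (by rwa [Qc_star]))
  have hY : HasSum (fun n => 2 * (p ^ n + star p ^ n) * s⁻¹ ^ (n + 2))
      (2 * (cauchyKernelL s p + cauchyKernelL s (star p)) * s⁻¹) := by
    have hterm : (fun n => 2 * (p ^ n * s⁻¹ ^ (n + 1) + star p ^ n * s⁻¹ ^ (n + 1)) * s⁻¹)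
        = fun n => 2 * (p ^ n + star p ^ n) * s⁻¹ ^ (n + 2) :=
      funext fun n => by rw [pow_succ _ (n + 1)]; noncomm_ring
    simpa only [hterm] using (hK.mul_left 2).mul_right s⁻¹
  have hTs := mul_eq_mul_add_of_hasSum_of_succ hT hY
    (fun n => by rw [pow_succ _ (n + 2), mul_assoc, inv_mul_cancel₀ hs, mul_one])
    (by rw [p2Coeff_zero, pow_zero, pow_zero]; norm_num)
    (fun n => by rw [p2Coeff_succ]; noncomm_ring)
  rw [hTs, mul_assoc _ s⁻¹ s, inv_mul_cancel₀ hs, mul_one, add_sub_cancel_left]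

-- The series is indexed by `m = n - 1`.
/-- For `p ∉ [s]` with `|p| < |s|`, the `P₂`-kernel has the absolutely convergent expansion
`P₂^L(s,p) = 2 ∑_{n≥1} (n p^{n-1} + ∑_{j=1}^n p^{n-j} p̄^{j-1}) s^{-1-n}`
(here the series is indexed by `m = n - 1`). -/
theorem P2L_series_expansion (s p : ℍ[ℝ]) (h1 : p ∉ qSphere s) (h2 : ‖p‖ < ‖s‖) :
    HasSum (fun m : ℕ =>
        2 * (((m + 1 : ℕ) : ℍ[ℝ]) * p ^ m +
          ∑ j ∈ Finset.range (m + 1), p ^ (m - j) * (star p) ^ j) * (s⁻¹) ^ (m + 2))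
      (P2L s p) ∧
    Summable (fun m : ℕ =>
        ‖2 * (((m + 1 : ℕ) : ℍ[ℝ]) * p ^ m +
          ∑ j ∈ Finset.range (m + 1), p ^ (m - j) * (star p) ^ j) * (s⁻¹) ^ (m + 2)‖) := by
  have hQ := Qc_ne_zero h1
  have hcoeff (m : ℕ) : ‖2 * p2Coeff p (star p) m‖ ≤ 4 * (m + 1) * ‖p‖ ^ m := by
    rw [two_mul]
    linarith [norm_add_le (p2Coeff p (star p) m) (p2Coeff p (star p) m),
      norm_p2Coeff_le (Quaternion.norm_star p).le m]
  have hnorm := summable_norm_mul_inv_pow h2 hcoeff 2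
  obtain ⟨T, hT⟩ := hnorm.of_norm
  refine ⟨?_, hnorm⟩
  rwa [P2L_eq_sylvesterSolution,
    ← eq_sylvesterSolution_of_mul_sub_mul_eq hQ (mul_sub_mul_eq_of_hasSum_p2Coeff h2 hQ hT)]
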